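/- arXiv:1811.05524 — 8 statements merged into one kernel-verified Lean document; each statement's English description precedes it below -/
import Mathlib

section
/- With G = (Ψ_id + W Ψ_f Wᵀ)^{-1} for positive definite diagonal Ψ_id, Ψ_f and W with linearly independent columns, the expected execution cost of a portfolio v = W u equals (1/2) uᵀ ((Wᵀ Ψ_id^{-1} W)^{-1} + Ψ_f)^{-1} u. In particular, as the single-stock liquidity is scaled by α → 0 and index-fund liquidity by β → 1 (i.e., G_{α,β} = (α Ψ_id + β W Ψ_f Wᵀ)^{-1}), the cost (1/2)(Wu)ᵀ G_{α,β} (Wu) converges to (1/2) uᵀ Ψ_f^{-1} u. -/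
open Matrix Filter Topology

lemma stmt3_aux {N K : ℕ}
    (ψid : Fin N → ℝ) (hψid : ∀ i, 0 < ψid i)
    (ψf : Fin K → ℝ) (hψf : ∀ k, 0 < ψf k)
    (W : Matrix (Fin N) (Fin K) ℝ) (hW : LinearIndependent ℝ Wᵀ)
    (u : Fin K → ℝ) :
    (W *ᵥ u) ⬝ᵥ ((diagonal ψid + W * diagonal ψf * Wᵀ)⁻¹ *ᵥ (W *ᵥ u)) =
      u ⬝ᵥ (((Wᵀ * (diagonal ψid)⁻¹ * W)⁻¹ + diagonal ψf)⁻¹ *ᵥ u) := by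
  set D : Matrix (Fin N) (Fin N) ℝ := diagonal ψid with hD_def
  set F : Matrix (Fin K) (Fin K) ℝ := diagonal ψf with hF_def
  have hD : D.PosDef := posDef_diagonal_iff.mpr hψid
  have hF : F.PosDef := posDef_diagonal_iff.mpr hψf
  have hDinv_eq : D⁻¹ = diagonal (fun i => (ψid i)⁻¹) := by
    apply inv_eq_right_inv
    rw [hD_def, diagonal_mul_diagonal, ← diagonal_one]
    exact congrArg _ (funext fun i => mul_inv_cancel₀ (hψid i).ne')
  have hFinv_eq : F⁻¹ = diagonal (fun k => (ψf k)⁻¹) := by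
    apply inv_eq_right_inv
    rw [hF_def, diagonal_mul_diagonal, ← diagonal_one]
    exact congrArg _ (funext fun k => mul_inv_cancel₀ (hψf k).ne')
  have hDinv : (D⁻¹).PosDef := by
    rw [hDinv_eq]; exact posDef_diagonal_iff.mpr fun i => inv_pos.mpr (hψid i)
  have hFinv : (F⁻¹).PosDef := by
    rw [hFinv_eq]; exact posDef_diagonal_iff.mpr fun k => inv_pos.mpr (hψf k)
  have hWinj : Function.Injective W.mulVec := mulVec_injective_iff.mpr hW
  set A : Matrix (Fin K) (Fin K) ℝ := Wᵀ * D⁻¹ * W with hA_def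
  have hWt : Wᵀ = Wᴴ := (conjTranspose_eq_transpose_of_trivial W).symm
  have hA : A.PosDef := by
    refine posDef_iff_dotProduct_mulVec.mpr ⟨?_, ?_⟩
    · rw [hA_def, hWt]
      exact isHermitian_conjTranspose_mul_mul W hDinv.1
    · intro x hx
      have hx' : W *ᵥ x ≠ 0 := fun h => hx (hWinj (by simpa using h))
      have := hDinv.dotProduct_mulVec_pos hx'
      simpa only [hA_def, star_mulVec, dotProduct_mulVec, vecMul_vecMul, hWt] using this
  set S : Matrix (Fin N) (Fin N) ℝ := D + W * F * Wᵀ with hS_def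
  have hS : S.PosDef := by
    rw [hS_def, hWt]
    exact hD.add_posSemidef (hF.posSemidef.mul_mul_conjTranspose_same W)
  set B : Matrix (Fin K) (Fin K) ℝ := 1 + F * A with hB_def
  have hFA : F⁻¹ + A |>.PosDef := hFinv.add hA
  have hB_eq : B = F * (F⁻¹ + A) := by
    rw [hB_def, Matrix.mul_add, mul_nonsing_inv _ hF.det_pos.ne'.isUnit]
  have hBdet : IsUnit B.det := by
    rw [hB_eq, det_mul]
    exact (mul_pos hF.det_pos hFA.det_pos).ne'.isUnit
  have hSdet : IsUnit S.det := hS.det_pos.ne'.isUnit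
  have hAdet : IsUnit A.det := hA.det_pos.ne'.isUnit
  have hDdet : IsUnit D.det := hD.det_pos.ne'.isUnit
  -- key: S * (D⁻¹ * W * B⁻¹) = W
  have key1 : S * (D⁻¹ * W * B⁻¹) = W := by
    have h1 : S * D⁻¹ * W = W * B := by
      rw [hS_def, hB_def, hA_def]
      simp only [Matrix.add_mul, Matrix.mul_add, Matrix.mul_one, Matrix.mul_assoc,
        Matrix.mul_nonsing_inv_cancel_left _ _ hDdet]
    calc S * (D⁻¹ * W * B⁻¹) = (S * D⁻¹ * W) * B⁻¹ := by simp only [Matrix.mul_assoc]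
      _ = W * B * B⁻¹ := by rw [h1]
      _ = W := by rw [Matrix.mul_assoc, mul_nonsing_inv _ hBdet, Matrix.mul_one]
  have key2 : S⁻¹ * W = D⁻¹ * W * B⁻¹ := by
    conv_lhs => rw [← key1]
    rw [← Matrix.mul_assoc, nonsing_inv_mul _ hSdet, Matrix.one_mul]
  have key3 : (A⁻¹ + F)⁻¹ = A * B⁻¹ := by
    apply inv_eq_right_inv
    calc (A⁻¹ + F) * (A * B⁻¹) = ((A⁻¹ + F) * A) * B⁻¹ := by rw [← Matrix.mul_assoc]
      _ = (1 + F * A) * B⁻¹ := by rw [Matrix.add_mul, nonsing_inv_mul _ hAdet]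
      _ = B * B⁻¹ := by rw [hB_def]
      _ = 1 := mul_nonsing_inv _ hBdet
  have key4 : Wᵀ * S⁻¹ * W = (A⁻¹ + F)⁻¹ := by
    rw [Matrix.mul_assoc, key2, key3, hA_def]
    simp only [Matrix.mul_assoc]
  have hdot : (W *ᵥ u) ⬝ᵥ (S⁻¹ *ᵥ (W *ᵥ u)) = u ⬝ᵥ ((Wᵀ * S⁻¹ * W) *ᵥ u) := by
    rw [← mulVec_mulVec, ← mulVec_mulVec, dotProduct_mulVec u, vecMul_transpose]
  rw [hdot, key4]

lemma stmt3_posdefA {N K : ℕ}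
    (ψid : Fin N → ℝ) (hψid : ∀ i, 0 < ψid i)
    (W : Matrix (Fin N) (Fin K) ℝ) (hW : LinearIndependent ℝ Wᵀ) :
    (Wᵀ * (diagonal ψid)⁻¹ * W).PosDef := by
  have hD : (diagonal ψid).PosDef := posDef_diagonal_iff.mpr hψid
  have hDinv_eq : (diagonal ψid)⁻¹ = diagonal (fun i => (ψid i)⁻¹) := by
    apply inv_eq_right_inv
    rw [diagonal_mul_diagonal, ← diagonal_one]
    exact congrArg _ (funext fun i => mul_inv_cancel₀ (hψid i).ne')
  have hDinv : ((diagonal ψid)⁻¹).PosDef := by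
    rw [hDinv_eq]; exact posDef_diagonal_iff.mpr fun i => inv_pos.mpr (hψid i)
  have hWinj : Function.Injective W.mulVec := mulVec_injective_iff.mpr hW
  have hWt : Wᵀ = Wᴴ := (conjTranspose_eq_transpose_of_trivial W).symm
  refine posDef_iff_dotProduct_mulVec.mpr ⟨?_, ?_⟩
  · rw [hWt]
    exact isHermitian_conjTranspose_mul_mul W hDinv.1
  · intro x hx
    have hx' : W *ᵥ x ≠ 0 := fun h => hx (hWinj (by simpa using h))
    have := hDinv.dotProduct_mulVec_pos hx'
    simpa only [star_mulVec, dotProduct_mulVec, vecMul_vecMul, hWt] using this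

/-- With `G = (Ψid + W Ψf Wᵀ)⁻¹`, the cost of executing `v = W u` is
`(1/2) uᵀ ((Wᵀ Ψid⁻¹ W)⁻¹ + Ψf)⁻¹ u`, and as the single-stock liquidity is scaled by
`α → 0⁺` and the index-fund liquidity by `β → 1`, the cost
`(1/2) (Wu)ᵀ (α Ψid + β W Ψf Wᵀ)⁻¹ (Wu)` converges to `(1/2) uᵀ Ψf⁻¹ u`. -/
theorem stmt3 {N K : ℕ}
    (ψid : Fin N → ℝ) (hψid : ∀ i, 0 < ψid i)
    (ψf : Fin K → ℝ) (hψf : ∀ k, 0 < ψf k)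
    (W : Matrix (Fin N) (Fin K) ℝ) (hW : LinearIndependent ℝ Wᵀ)
    (u : Fin K → ℝ) :
    (1 / 2) * ((W *ᵥ u) ⬝ᵥ ((diagonal ψid + W * diagonal ψf * Wᵀ)⁻¹ *ᵥ (W *ᵥ u))) =
      (1 / 2) * (u ⬝ᵥ (((Wᵀ * (diagonal ψid)⁻¹ * W)⁻¹ + diagonal ψf)⁻¹ *ᵥ u)) ∧
    Tendsto
      (fun p : ℝ × ℝ =>
        (1 / 2) * ((W *ᵥ u) ⬝ᵥ
          ((p.1 • diagonal ψid + p.2 • (W * diagonal ψf * Wᵀ))⁻¹ *ᵥ (W *ᵥ u))))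
      ((𝓝[>] (0 : ℝ)) ×ˢ 𝓝 (1 : ℝ))
      (𝓝 ((1 / 2) * (u ⬝ᵥ ((diagonal ψf)⁻¹ *ᵥ u)))) := by
  constructor
  · rw [stmt3_aux ψid hψid ψf hψf W hW u]
  · set D : Matrix (Fin N) (Fin N) ℝ := diagonal ψid with hD_def
    set F : Matrix (Fin K) (Fin K) ℝ := diagonal ψf with hF_def
    set A : Matrix (Fin K) (Fin K) ℝ := Wᵀ * D⁻¹ * W with hA_def
    have hD : D.PosDef := posDef_diagonal_iff.mpr hψid
    have hF : F.PosDef := posDef_diagonal_iff.mpr hψf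
    have hA : A.PosDef := stmt3_posdefA ψid hψid W hW
    have hDdet : IsUnit D.det := hD.det_pos.ne'.isUnit
    have hAdet : IsUnit A.det := hA.det_pos.ne'.isUnit
    have hFdet : F.det ≠ 0 := hF.det_pos.ne'
    -- the parametric cost identity
    have hcost : ∀ α : ℝ, 0 < α → ∀ β : ℝ, 0 < β →
        (W *ᵥ u) ⬝ᵥ ((α • D + β • (W * F * Wᵀ))⁻¹ *ᵥ (W *ᵥ u)) =
          u ⬝ᵥ ((α • A⁻¹ + β • F)⁻¹ *ᵥ u) := by
      intro α hα β hβ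
      have h1 := stmt3_aux (fun i => α * ψid i) (fun i => mul_pos hα (hψid i))
        (fun k => β * ψf k) (fun k => mul_pos hβ (hψf k)) W hW u
      have e1 : diagonal (fun i => α * ψid i) = α • D := by
        rw [hD_def, ← diagonal_smul]; rfl
      have e2 : diagonal (fun k => β * ψf k) = β • F := by
        rw [hF_def, ← diagonal_smul]; rfl
      have e3 : (α • D)⁻¹ = α⁻¹ • D⁻¹ := by
        simpa [Units.smul_def] using Matrix.inv_smul' (A := D) (Units.mk0 α hα.ne') hDdet
      have e4 : Wᵀ * (α⁻¹ • D⁻¹) * W = α⁻¹ • A := by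
        rw [hA_def, Matrix.mul_smul, Matrix.smul_mul]
      have e5 : (α⁻¹ • A)⁻¹ = α • A⁻¹ := by
        simpa [Units.smul_def, inv_inv] using
          Matrix.inv_smul' (A := A) (Units.mk0 α⁻¹ (inv_ne_zero hα.ne')) hAdet
      have e6 : W * (β • F) * Wᵀ = β • (W * F * Wᵀ) := by
        rw [Matrix.mul_smul, Matrix.smul_mul]
      rw [e1, e2, e3, e4, e5, e6] at h1
      exact h1
    -- the limit of the closed form
    have htm : Tendsto (fun p : ℝ × ℝ => p.1 • A⁻¹ + p.2 • F)
        ((𝓝[>] (0 : ℝ)) ×ˢ 𝓝 (1 : ℝ)) (𝓝 F) := by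
      have hc : Continuous (fun p : ℝ × ℝ => p.1 • A⁻¹ + p.2 • F) :=
        (continuous_fst.smul continuous_const).add (continuous_snd.smul continuous_const)
      have h0 : Tendsto (fun p : ℝ × ℝ => p.1 • A⁻¹ + p.2 • F) (𝓝 ((0 : ℝ), (1 : ℝ)))
          (𝓝 F) := by
        simpa using hc.tendsto ((0 : ℝ), (1 : ℝ))
      exact h0.mono_left (by rw [nhds_prod_eq]
                             exact Filter.prod_mono nhdsWithin_le_nhds le_rfl)
    have hinv : Tendsto (fun p : ℝ × ℝ => (p.1 • A⁻¹ + p.2 • F)⁻¹)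
        ((𝓝[>] (0 : ℝ)) ×ˢ 𝓝 (1 : ℝ)) (𝓝 F⁻¹) := by
      have hci : ContinuousAt Inv.inv F := by
        apply continuousAt_matrix_inv
        rw [Ring.inverse_eq_inv']
        exact continuousAt_inv₀ hFdet
      exact hci.tendsto.comp htm
    have hcont : Continuous (fun M : Matrix (Fin K) (Fin K) ℝ =>
        (1 / 2 : ℝ) * (u ⬝ᵥ (M *ᵥ u))) :=
      continuous_const.mul
        (Continuous.dotProduct continuous_const
          (continuous_id.matrix_mulVec continuous_const))
    have hfin := (hcont.tendsto F⁻¹).comp hinv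
    have hev : ∀ᶠ p : ℝ × ℝ in (𝓝[>] (0 : ℝ)) ×ˢ 𝓝 (1 : ℝ), 0 < p.1 ∧ 0 < p.2 :=
      (eventually_mem_nhdsWithin.prod_inl _).and ((eventually_gt_nhds one_pos).prod_inr _)
    refine Tendsto.congr' (hev.mono fun p hp => ?_) hfin
    simp only [Function.comp]
    rw [hcost p.1 hp.1 p.2 hp.2]
end

section
/- Let Ψ_id be diagonal positive definite, Ψ_f diagonal positive definite, W with linearly independent columns, and G_α = (α Ψ_id + W Ψ_f Wᵀ)^{-1} for α > 0. If v ∉ span of the columns of W, then vᵀ G_α v → ∞ as α → 0⁺. More precisely, writing v = W u + e with Wᵀ e = 0 and e ≠ 0, one has lim_{α→0⁺} α · vᵀ G_α v = eᵀ (Ψ_id^{-1} − Ψ_id^{-1} W (Wᵀ Ψ_id^{-1} W)^{-1} Wᵀ Ψ_id^{-1}) e > 0. -/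
open Matrix Filter Topology

/-- In the limit of vanishing single-stock liquidity, portfolios outside the span of the
index-fund weight vectors cost infinitely much: writing `v = W u + e` with `Wᵀ e = 0` and
`e ≠ 0`, the quantity `α · vᵀ (α Ψid + W Ψf Wᵀ)⁻¹ v` converges, as `α → 0⁺`, to
`eᵀ (Ψid⁻¹ − Ψid⁻¹ W (Wᵀ Ψid⁻¹ W)⁻¹ Wᵀ Ψid⁻¹) e > 0`, and `vᵀ G_α v → ∞`. -/
theorem stmt4 {N K : ℕ}
    (ψid : Fin N → ℝ) (hψid : ∀ i, 0 < ψid i)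
    (ψf : Fin K → ℝ) (hψf : ∀ k, 0 < ψf k)
    (W : Matrix (Fin N) (Fin K) ℝ) (hW : LinearIndependent ℝ Wᵀ)
    (u : Fin K → ℝ) (e : Fin N → ℝ) (he : Wᵀ *ᵥ e = 0) (hene : e ≠ 0)
    (v : Fin N → ℝ) (hv : v = W *ᵥ u + e) :
    (0 < e ⬝ᵥ (((diagonal ψid)⁻¹ -
        (diagonal ψid)⁻¹ * W * (Wᵀ * (diagonal ψid)⁻¹ * W)⁻¹ * Wᵀ * (diagonal ψid)⁻¹) *ᵥ e)) ∧
    Tendsto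
      (fun α : ℝ =>
        α * (v ⬝ᵥ ((α • diagonal ψid + W * diagonal ψf * Wᵀ)⁻¹ *ᵥ v)))
      (𝓝[>] (0 : ℝ))
      (𝓝 (e ⬝ᵥ (((diagonal ψid)⁻¹ -
        (diagonal ψid)⁻¹ * W * (Wᵀ * (diagonal ψid)⁻¹ * W)⁻¹ * Wᵀ * (diagonal ψid)⁻¹) *ᵥ e))) ∧
    Tendsto
      (fun α : ℝ => v ⬝ᵥ ((α • diagonal ψid + W * diagonal ψf * Wᵀ)⁻¹ *ᵥ v))
      (𝓝[>] (0 : ℝ)) atTop := by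
  classical
  set D : Matrix (Fin N) (Fin N) ℝ := diagonal ψid with hD
  have hDpd : D.PosDef := Matrix.PosDef.diagonal hψid
  set Di : Matrix (Fin N) (Fin N) ℝ := D⁻¹ with hDi
  have hDipd : Di.PosDef := hDpd.inv
  have hDdet : IsUnit D.det := hDpd.det_pos.ne'.isUnit
  set Ψ : Matrix (Fin K) (Fin K) ℝ := diagonal ψf with hΨ
  set Ψi : Matrix (Fin K) (Fin K) ℝ := diagonal (fun k => (ψf k)⁻¹) with hΨi
  have hΨΨi : Ψ * Ψi = 1 := by
    rw [hΨ, hΨi, diagonal_mul_diagonal]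
    have h : (fun i => ψf i * (ψf i)⁻¹) = fun _ : Fin K => (1 : ℝ) :=
      funext fun k => mul_inv_cancel₀ (hψf k).ne'
    rw [h, diagonal_one]
  have hΨinv : Ψ⁻¹ = Ψi := inv_eq_right_inv hΨΨi
  have hΨunit : IsUnit Ψ := (Matrix.PosDef.diagonal hψf).isUnit
  -- injectivity of W
  have hWinj : Function.Injective (W.mulVec) := Matrix.mulVec_injective_iff.mpr hW
  have hWne : ∀ x : Fin K → ℝ, x ≠ 0 → W *ᵥ x ≠ 0 := by
    intro x hx h0
    exact hx (hWinj (by rw [h0, Matrix.mulVec_zero]))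
  -- the family B
  set B : ℝ → Matrix (Fin K) (Fin K) ℝ := fun α => α • Ψi + Wᵀ * Di * W with hB
  have hWDW : (Wᵀ * Di * W).PosDef := by
    have hps : (Wᵀ * Di * W).PosSemidef := by
      have h := Matrix.PosSemidef.conjTranspose_mul_mul_same (Matrix.PosDef.posSemidef hDipd) W
      rwa [conjTranspose_eq_transpose_of_trivial] at h
    refine Matrix.PosDef.of_dotProduct_mulVec_pos hps.1 fun x hx => ?_
    have h1 := hDipd.dotProduct_mulVec_pos (hWne x hx)
    simpa [star_trivial, ← mulVec_mulVec, dotProduct_mulVec, vecMul_transpose] using h1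
  have hBpd : ∀ α : ℝ, 0 ≤ α → (B α).PosDef := by
    intro α hα
    refine Matrix.PosDef.posSemidef_add ?_ hWDW
    have h : α • Ψi = diagonal (fun k => α * (ψf k)⁻¹) := by
      rw [hΨi, ← diagonal_smul]
      congr 1
    rw [h]
    refine posSemidef_diagonal_iff.mpr fun k => ?_
    have := (hψf k)
    positivity
  have hBdet : ∀ α : ℝ, 0 ≤ α → IsUnit (B α).det :=
    fun α hα => ((hBpd α hα).det_pos).ne'.isUnit
  have hB0 : B 0 = Wᵀ * Di * W := by simp [hB]
  have hB0det : IsUnit (B 0).det := hBdet 0 le_rfl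
  set P : ℝ → Matrix (Fin N) (Fin N) ℝ := fun α => Di - Di * W * (B α)⁻¹ * Wᵀ * Di with hP
  have hP0 : Di - Di * W * (Wᵀ * Di * W)⁻¹ * Wᵀ * Di = P 0 := by
    simp only [hP, hB0]
  rw [hP0]
  -- the key Woodbury computation
  have key : ∀ α : ℝ, 0 < α → (α • D + W * Ψ * Wᵀ)⁻¹ = α⁻¹ • P α := by
    intro α hα
    have hα' : α ≠ 0 := hα.ne'
    have hinv : Invertible α := invertibleOfNonzero hα'
    have hαD : IsUnit (α • D) := by
      rw [Matrix.isUnit_iff_isUnit_det, det_smul]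
      exact (hα'.isUnit.pow _).mul hDdet
    have hαDinv : (α • D)⁻¹ = α⁻¹ • Di := by
      refine inv_eq_right_inv ?_
      rw [Matrix.smul_mul, Matrix.mul_smul, smul_smul, mul_inv_cancel₀ hα',
        one_smul, mul_nonsing_inv _ hDdet]
    have hmid : Ψ⁻¹ + Wᵀ * (α • D)⁻¹ * W = α⁻¹ • B α := by
      rw [hΨinv, hαDinv, hB]
      simp only [smul_add, smul_smul, inv_mul_cancel₀ hα', one_smul,
        Matrix.mul_smul, Matrix.smul_mul]
    have hmidUnit : IsUnit (Ψ⁻¹ + Wᵀ * (α • D)⁻¹ * W) := by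
      rw [hmid, Matrix.isUnit_iff_isUnit_det, det_smul]
      exact ((inv_ne_zero hα').isUnit.pow _).mul (hBdet α hα.le)
    have hw := Matrix.add_mul_mul_inv_eq_sub (α • D) W Ψ Wᵀ hαD hΨunit hmidUnit
    have hmidinv : (Ψ⁻¹ + Wᵀ * (α • D)⁻¹ * W)⁻¹ = α • (B α)⁻¹ := by
      rw [hmid]
      refine inv_eq_right_inv ?_
      rw [Matrix.smul_mul, Matrix.mul_smul, smul_smul, inv_mul_cancel₀ hα',
        one_smul, mul_nonsing_inv _ (hBdet α hα.le)]
    rw [hw, hmidinv, hαDinv]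
    simp only [hP]
    simp only [Matrix.smul_mul, Matrix.mul_smul, smul_smul, smul_sub]
    congr 2
    field_simp
  -- P 0 kills the range of W
  have hB0' : Wᵀ * (Di * W) = B 0 := by rw [← Matrix.mul_assoc, ← hB0]
  have hP0W : P 0 * W = 0 := by
    simp only [hP, Matrix.sub_mul]
    simp only [Matrix.mul_assoc]
    rw [hB0', nonsing_inv_mul _ hB0det, Matrix.mul_one, sub_self]
  -- the projection decomposition for positivity
  set c : Fin K → ℝ := (B 0)⁻¹ *ᵥ (Wᵀ *ᵥ (Di *ᵥ e)) with hc
  set f : Fin N → ℝ := e - W *ᵥ c with hf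
  have hPe : P 0 *ᵥ e = Di *ᵥ f := by
    simp only [hP, sub_mulVec, ← mulVec_mulVec, hf, mulVec_sub]
    rfl
  have hWtDf : Wᵀ *ᵥ (Di *ᵥ f) = 0 := by
    have h1 : (B 0) *ᵥ c = Wᵀ *ᵥ (Di *ᵥ e) := by
      rw [hc, mulVec_mulVec, mul_nonsing_inv _ hB0det, one_mulVec]
    have h2 : Wᵀ *ᵥ (Di *ᵥ (W *ᵥ c)) = (B 0) *ᵥ c := by
      rw [mulVec_mulVec, mulVec_mulVec, ← hB0]
    rw [hf, mulVec_sub, mulVec_sub, h2, h1, sub_self]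
  have hLf : e ⬝ᵥ (Di *ᵥ f) = f ⬝ᵥ (Di *ᵥ f) := by
    have he2 : e = f + W *ᵥ c := by rw [hf, sub_add_cancel]
    rw [he2, add_dotProduct]
    have h3 : (W *ᵥ c) ⬝ᵥ (Di *ᵥ f) = c ⬝ᵥ (Wᵀ *ᵥ (Di *ᵥ f)) := by
      rw [dotProduct_mulVec c, vecMul_transpose]
    rw [h3, hWtDf, dotProduct_zero, add_zero]
  have hfne : f ≠ 0 := by
    intro h0
    have he' : e = W *ᵥ c := by
      have := sub_eq_zero.mp (hf ▸ h0)
      exact this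
    have hWtWc : Wᵀ *ᵥ (W *ᵥ c) = 0 := by rw [← he', he]
    have h2 : (W *ᵥ c) ⬝ᵥ (W *ᵥ c) = 0 := by
      have : c ⬝ᵥ (Wᵀ *ᵥ (W *ᵥ c)) = (W *ᵥ c) ⬝ᵥ (W *ᵥ c) := by
        rw [dotProduct_mulVec c, vecMul_transpose]
      rw [← this, hWtWc, dotProduct_zero]
    have h3 : W *ᵥ c = 0 := dotProduct_self_eq_zero.mp h2
    exact hene (by rw [he', h3])
  have hLpos : 0 < e ⬝ᵥ (P 0 *ᵥ e) := by
    rw [hPe, hLf]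
    have h := hDipd.dotProduct_mulVec_pos hfne
    simpa using h
  -- continuity of α ↦ vᵀ P(α) v at 0
  have hBcont : Continuous B := by
    rw [hB]
    exact (continuous_id.smul continuous_const).add continuous_const
  have hBinvCont : ContinuousAt (fun α => (B α)⁻¹) 0 := by
    have h1 : ContinuousAt Inv.inv (B 0) := by
      apply continuousAt_matrix_inv
      rw [Ring.inverse_eq_inv']
      exact continuousAt_inv₀ ((hBpd 0 le_rfl).det_pos.ne')
    exact h1.comp hBcont.continuousAt
  have hQcont : ContinuousAt (fun α => v ⬝ᵥ (P α *ᵥ v)) 0 := by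
    have h2 : Continuous (fun M : Matrix (Fin K) (Fin K) ℝ =>
        v ⬝ᵥ ((Di - Di * W * M * Wᵀ * Di) *ᵥ v)) := by
      refine Continuous.dotProduct continuous_const
        (Continuous.matrix_mulVec ?_ continuous_const)
      exact continuous_const.sub
        (((continuous_const.matrix_mul continuous_id).matrix_mul
          continuous_const).matrix_mul continuous_const)
    have h3 := h2.continuousAt.comp hBinvCont
    simpa [Function.comp_def, hP] using h3
  have htend : Tendsto (fun α => v ⬝ᵥ (P α *ᵥ v)) (𝓝[>] (0:ℝ)) (𝓝 (v ⬝ᵥ (P 0 *ᵥ v))) :=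
    hQcont.tendsto.mono_left nhdsWithin_le_nhds
  have hvPv : v ⬝ᵥ (P 0 *ᵥ v) = e ⬝ᵥ (P 0 *ᵥ e) := by
    have hcross : (W *ᵥ u) ⬝ᵥ (P 0 *ᵥ e) = 0 := by
      rw [hPe]
      have h4 : u ⬝ᵥ (Wᵀ *ᵥ (Di *ᵥ f)) = (W *ᵥ u) ⬝ᵥ (Di *ᵥ f) := by
        rw [dotProduct_mulVec u, vecMul_transpose]
      rw [← h4, hWtDf, dotProduct_zero]
    have hPv : P 0 *ᵥ v = P 0 *ᵥ e := by
      rw [hv, mulVec_add, mulVec_mulVec, hP0W, zero_mulVec, zero_add]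
    rw [hPv, hv, add_dotProduct, hcross, zero_add]
  have heq : (fun α : ℝ => v ⬝ᵥ (P α *ᵥ v)) =ᶠ[𝓝[>] (0:ℝ)]
      (fun α : ℝ => α * (v ⬝ᵥ ((α • D + W * Ψ * Wᵀ)⁻¹ *ᵥ v))) := by
    filter_upwards [self_mem_nhdsWithin] with α hα
    have hα0 : (0:ℝ) < α := hα
    rw [key α hα0, smul_mulVec, dotProduct_smul, smul_eq_mul, ← mul_assoc,
      mul_inv_cancel₀ hα0.ne', one_mul]
  have h2main : Tendsto (fun α : ℝ => α * (v ⬝ᵥ ((α • D + W * Ψ * Wᵀ)⁻¹ *ᵥ v)))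
      (𝓝[>] (0:ℝ)) (𝓝 (e ⬝ᵥ (P 0 *ᵥ e))) := by
    rw [← hvPv]
    exact htend.congr' heq
  refine ⟨hLpos, h2main, ?_⟩
  have h3eq : (fun α : ℝ => α⁻¹ * (α * (v ⬝ᵥ ((α • D + W * Ψ * Wᵀ)⁻¹ *ᵥ v)))) =ᶠ[𝓝[>] (0:ℝ)]
      (fun α : ℝ => v ⬝ᵥ ((α • D + W * Ψ * Wᵀ)⁻¹ *ᵥ v)) := by
    filter_upwards [self_mem_nhdsWithin] with α hα
    exact inv_mul_cancel_left₀ (ne_of_gt hα) _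
  have h3 : Tendsto (fun α : ℝ => α⁻¹ * (α * (v ⬝ᵥ ((α • D + W * Ψ * Wᵀ)⁻¹ *ᵥ v))))
      (𝓝[>] (0:ℝ)) atTop :=
    Filter.Tendsto.atTop_mul_pos hLpos tendsto_inv_nhdsGT_zero h2main
  exact h3.congr' h3eq
end

section
/- Let Ψ̄_id be N×N diagonal positive definite, Ψ̄_f K×K diagonal positive definite, and W ∈ ℝ^{N×K} of full column rank. Suppose G_t = (α_t Ψ̄_id + β_t W Ψ̄_f Wᵀ)^{-1} with α_t, β_t > 0 and Σ_t α_t = Σ_t β_t = 1. Then the optimal execution schedule satisfies v_t* = G_t^{-1}(Σ_s G_s^{-1})^{-1} x₀ = α_t x₀ + (β_t − α_t) · W (Ψ̄_f^{-1} + Wᵀ Ψ̄_id^{-1} W)^{-1} Wᵀ Ψ̄_id^{-1} x₀. -/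
open Matrix Finset

/-!
Since `Σ α_s = Σ β_s = 1`, the matrices `G_s⁻¹ = α_s Ψ̄id + β_s B` with `B = W Ψ̄f Wᵀ` sum to
`Ψ̄id + B`, so `G_t⁻¹ (Ψ̄id + B)⁻¹ = α_t I + (β_t - α_t) B (Ψ̄id + B)⁻¹`, and the Woodbury identity
rewrites `B (Ψ̄id + B)⁻¹` as `W (Ψ̄f⁻¹ + Wᵀ Ψ̄id⁻¹ W)⁻¹ Wᵀ Ψ̄id⁻¹`.
-/

namespace Matrix

variable {n m R : Type*} [Fintype n] [DecidableEq n] [Fintype m] [DecidableEq m] [CommRing R]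

theorem smul_add_smul_mul_inv_add {A B : Matrix n n R} (hAB : IsUnit (A + B)) (a b : R) :
    (a • A + b • B) * (A + B)⁻¹ = a • 1 + (b - a) • (B * (A + B)⁻¹) := by
  have hinv : (A + B) * (A + B)⁻¹ = 1 := mul_nonsing_inv _ ((isUnit_iff_isUnit_det _).mp hAB)
  calc (a • A + b • B) * (A + B)⁻¹ = a • ((A + B) * (A + B)⁻¹) + (b - a) • (B * (A + B)⁻¹) := by
        simp only [add_mul, smul_mul_assoc]; module
    _ = _ := by rw [hinv]

/-- From the Woodbury identity, since `U C V (A + U C V)⁻¹ = 1 - A (A + U C V)⁻¹`. -/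
theorem mul_mul_mul_add_mul_mul_inv (A : Matrix n n R) (U : Matrix n m R) (C : Matrix m m R)
    (V : Matrix m n R) (hA : IsUnit A) (hC : IsUnit C) (hAC : IsUnit (C⁻¹ + V * A⁻¹ * U)) :
    U * C * V * (A + U * C * V)⁻¹ = U * (C⁻¹ + V * A⁻¹ * U)⁻¹ * V * A⁻¹ := by
  have hsum : (A + U * C * V) * (A + U * C * V)⁻¹ = 1 := by
    obtain ⟨_⟩ := hA.nonempty_invertible
    obtain ⟨_⟩ := hC.nonempty_invertible
    obtain ⟨iAC⟩ := hAC.nonempty_invertible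
    simp only [← invOf_eq_nonsing_inv] at iAC
    let := invertibleAddMulMul A U C V
    exact mul_inv_of_invertible _
  have hAinv : A * A⁻¹ = 1 := mul_nonsing_inv _ ((isUnit_iff_isUnit_det _).mp hA)
  calc U * C * V * (A + U * C * V)⁻¹ = 1 - A * (A + U * C * V)⁻¹ := by
        rw [eq_sub_iff_add_eq, ← add_mul, add_comm, hsum]
    _ = _ := by
        rw [add_mul_mul_inv_eq_sub A U C V hA hC hAC, mul_sub, hAinv, sub_sub_cancel]
        simp only [← Matrix.mul_assoc, hAinv, Matrix.one_mul]

end Matrix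

theorem stmt9_general {N K T : ℕ}
    (ψid : Fin N → ℝ) (hψid : ∀ i, 0 < ψid i)
    (ψf : Fin K → ℝ) (hψf : ∀ k, 0 < ψf k)
    (W : Matrix (Fin N) (Fin K) ℝ)
    (α β : Fin T → ℝ) (hα : ∀ t, 0 < α t) (hβ : ∀ t, 0 < β t)
    (hαsum : ∑ t, α t = 1) (hβsum : ∑ t, β t = 1)
    (G : Fin T → Matrix (Fin N) (Fin N) ℝ)
    (hGdef : ∀ t, G t = (α t • diagonal ψid + β t • (W * diagonal ψf * Wᵀ))⁻¹)
    (x₀ : Fin N → ℝ) :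
    ∀ t, (G t)⁻¹ *ᵥ ((∑ s, (G s)⁻¹)⁻¹ *ᵥ x₀) =
      α t • x₀ + (β t - α t) •
        ((W * ((diagonal ψf)⁻¹ + Wᵀ * (diagonal ψid)⁻¹ * W)⁻¹ * Wᵀ * (diagonal ψid)⁻¹) *ᵥ x₀) := by
  intro t
  set A := diagonal ψid
  set F := diagonal ψf
  have hA : A.PosDef := .diagonal hψid
  have hF : F.PosDef := .diagonal hψf
  have hB : (W * F * Wᵀ).PosSemidef := by
    simpa using hF.posSemidef.mul_mul_conjTranspose_same W
  have hGinv (s : Fin T) : (G s)⁻¹ = α s • A + β s • (W * F * Wᵀ) := by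
    rw [hGdef, nonsing_inv_nonsing_inv]
    exact (isUnit_iff_isUnit_det _).mp
      ((hA.smul (hα s)).add_posSemidef (hB.smul (hβ s).le)).isUnit
  have hsum : ∑ s, (G s)⁻¹ = A + W * F * Wᵀ := by
    simp only [hGinv, sum_add_distrib, ← sum_smul, hαsum, hβsum, one_smul]
  have hC : (F⁻¹ + Wᵀ * A⁻¹ * W).PosDef :=
    hF.inv.add_posSemidef (by simpa using hA.inv.posSemidef.conjTranspose_mul_mul_same W)
  rw [mulVec_mulVec, hGinv, hsum, smul_add_smul_mul_inv_add (hA.add_posSemidef hB).isUnit,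
    mul_mul_mul_add_mul_mul_inv A W F Wᵀ hA.isUnit hF.isUnit hC.isUnit,
    add_mulVec, smul_mulVec, smul_mulVec, one_mulVec]

/-- Under structured intraday variation `G_t = (α_t Ψ̄id + β_t W Ψ̄f Wᵀ)⁻¹` with
`Σ α_t = Σ β_t = 1`, the optimal schedule is
`v_t* = α_t x₀ + (β_t − α_t) W (Ψ̄f⁻¹ + Wᵀ Ψ̄id⁻¹ W)⁻¹ Wᵀ Ψ̄id⁻¹ x₀`. -/
theorem stmt9 {N K T : ℕ}
    (ψid : Fin N → ℝ) (hψid : ∀ i, 0 < ψid i)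
    (ψf : Fin K → ℝ) (hψf : ∀ k, 0 < ψf k)
    (W : Matrix (Fin N) (Fin K) ℝ) (hW : LinearIndependent ℝ Wᵀ)
    (α β : Fin T → ℝ) (hα : ∀ t, 0 < α t) (hβ : ∀ t, 0 < β t)
    (hαsum : ∑ t, α t = 1) (hβsum : ∑ t, β t = 1)
    (G : Fin T → Matrix (Fin N) (Fin N) ℝ)
    (hGdef : ∀ t, G t = (α t • diagonal ψid + β t • (W * diagonal ψf * Wᵀ))⁻¹)
    (x₀ : Fin N → ℝ) :
    ∀ t, (G t)⁻¹ *ᵥ ((∑ s, (G s)⁻¹)⁻¹ *ᵥ x₀) =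
      α t • x₀ + (β t - α t) •
        ((W * ((diagonal ψf)⁻¹ + Wᵀ * (diagonal ψid)⁻¹ * W)⁻¹ * Wᵀ * (diagonal ψid)⁻¹) *ᵥ x₀) :=
  stmt9_general ψid hψid ψf hψf W α β hα hβ hαsum hβsum G hGdef x₀
end

section
/- Let Ψ̄_id be diagonal positive definite, w₁ ∈ ℝ^N nonzero, ψ̄_f > 0, and η₁ = ψ̄_f · w₁ᵀ Ψ̄_id^{-1} w₁. For x₀ ∈ ℝ^N with w₁ᵀ Ψ̄_id^{-1} x₀ ≠ 0, the ratio (x₀ᵀ Ψ̄_id^{-1} x₀)/(w₁ᵀ Ψ̄_id^{-1} x₀)² · (1+η₁)/ψ̄_f − 1 is positive, and the function f(x₀) := ((x₀ᵀ Ψ̄_id^{-1} x₀)/(w₁ᵀ Ψ̄_id^{-1} x₀)² · (1+η₁)/ψ̄_f − 1)^{-1} attains its maximum value η₁ at x₀ = w₁, i.e., f(x₀) ≤ η₁ = f(w₁) for all such x₀. -/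
open Matrix

/-- With `η₁ = ψ̄f · w₁ᵀ Ψ̄id⁻¹ w₁`, for any `x₀` with `w₁ᵀ Ψ̄id⁻¹ x₀ ≠ 0`, the quantity
`(x₀ᵀ Ψ̄id⁻¹ x₀)/(w₁ᵀ Ψ̄id⁻¹ x₀)² · (1+η₁)/ψ̄f − 1` is positive, and
`f(x₀) = (…)⁻¹` attains its maximum `η₁` at `x₀ = w₁`. -/
theorem stmt14 {N : ℕ}
    (ψid : Fin N → ℝ) (hψid : ∀ i, 0 < ψid i)
    (w₁ : Fin N → ℝ) (hw₁ : w₁ ≠ 0) (ψf : ℝ) (hψf : 0 < ψf)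
    (η₁ : ℝ) (hη₁ : η₁ = ψf * (w₁ ⬝ᵥ ((diagonal ψid)⁻¹ *ᵥ w₁)))
    (f : (Fin N → ℝ) → ℝ)
    (hf : ∀ x, f x =
      ((x ⬝ᵥ ((diagonal ψid)⁻¹ *ᵥ x)) / (w₁ ⬝ᵥ ((diagonal ψid)⁻¹ *ᵥ x)) ^ 2 *
        ((1 + η₁) / ψf) - 1)⁻¹) :
    (∀ x₀ : Fin N → ℝ, w₁ ⬝ᵥ ((diagonal ψid)⁻¹ *ᵥ x₀) ≠ 0 →
      0 < (x₀ ⬝ᵥ ((diagonal ψid)⁻¹ *ᵥ x₀)) / (w₁ ⬝ᵥ ((diagonal ψid)⁻¹ *ᵥ x₀)) ^ 2 *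
        ((1 + η₁) / ψf) - 1 ∧
      f x₀ ≤ η₁) ∧
    f w₁ = η₁ := by
  have hψne : ∀ i, ψid i ≠ 0 := fun i => (hψid i).ne'
  -- compute the quadratic form explicitly
  have hQ : ∀ a b : Fin N → ℝ, a ⬝ᵥ ((diagonal ψid)⁻¹ *ᵥ b)
      = ∑ i, a i * b i / ψid i := by
    intro a b
    have hinv : (diagonal ψid)⁻¹ = diagonal (fun i => (ψid i)⁻¹) :=
      Matrix.inv_eq_right_inv (by
        rw [Matrix.diagonal_mul_diagonal,
          show (fun i => ψid i * (ψid i)⁻¹) = fun _ => (1 : ℝ) from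
            funext fun i => mul_inv_cancel₀ (hψne i), Matrix.diagonal_one])
    rw [hinv]
    simp only [dotProduct, Matrix.mulVec_diagonal]
    exact Finset.sum_congr rfl fun i _ => by rw [div_eq_mul_inv]; ring
  set C : ℝ := ∑ i, w₁ i * w₁ i / ψid i with hCdef
  have hC : 0 < C := by
    obtain ⟨j, hj⟩ := Function.ne_iff.mp hw₁
    refine Finset.sum_pos' (fun i _ => div_nonneg (mul_self_nonneg _) (hψid i).le) ⟨j, Finset.mem_univ j, ?_⟩
    have hj' : 0 < w₁ j * w₁ j := mul_self_pos.mpr hj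
    exact div_pos hj' (hψid j)
  have hQww : w₁ ⬝ᵥ ((diagonal ψid)⁻¹ *ᵥ w₁) = C := hQ w₁ w₁
  have hη : η₁ = ψf * C := by rw [hη₁, hQww]
  have hηpos : 0 < η₁ := by rw [hη]; positivity
  -- main estimate for arbitrary x₀
  have main : ∀ x₀ : Fin N → ℝ, w₁ ⬝ᵥ ((diagonal ψid)⁻¹ *ᵥ x₀) ≠ 0 →
      0 < (x₀ ⬝ᵥ ((diagonal ψid)⁻¹ *ᵥ x₀)) / (w₁ ⬝ᵥ ((diagonal ψid)⁻¹ *ᵥ x₀)) ^ 2 *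
        ((1 + η₁) / ψf) - 1 ∧ f x₀ ≤ η₁ := by
    intro x₀ hB
    set A : ℝ := x₀ ⬝ᵥ ((diagonal ψid)⁻¹ *ᵥ x₀) with hAdef
    set B : ℝ := w₁ ⬝ᵥ ((diagonal ψid)⁻¹ *ᵥ x₀) with hBdef
    have hA : A = ∑ i, x₀ i * x₀ i / ψid i := hQ x₀ x₀
    have hBeq : B = ∑ i, w₁ i * x₀ i / ψid i := hQ w₁ x₀
    -- Cauchy–Schwarz : B² ≤ C * A
    have hCS : B ^ 2 ≤ C * A := by
      rw [hBeq, hA, hCdef]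
      refine Finset.sum_sq_le_sum_mul_sum_of_sq_eq_mul _
        (fun i _ => div_nonneg (mul_self_nonneg _) (hψid i).le)
        (fun i _ => div_nonneg (mul_self_nonneg _) (hψid i).le) (fun i _ => ?_)
      field_simp
    have hB2 : 0 < B ^ 2 := by positivity
    -- key inequality : 1/C ≤ A / B²
    have hkey : 1 / C ≤ A / B ^ 2 := by
      rw [div_le_div_iff₀ hC hB2]
      linarith [hCS]
    have hcoef : 0 < (1 + η₁) / ψf := by positivity
    have hstep : (1 + η₁) / (ψf * C) ≤ A / B ^ 2 * ((1 + η₁) / ψf) := by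
      have := mul_le_mul_of_nonneg_right hkey hcoef.le
      calc (1 + η₁) / (ψf * C) = 1 / C * ((1 + η₁) / ψf) := by
            rw [div_mul_div_comm, one_mul, mul_comm C ψf]
        _ ≤ A / B ^ 2 * ((1 + η₁) / ψf) := this
    have hlow : 1 / η₁ ≤ A / B ^ 2 * ((1 + η₁) / ψf) - 1 := by
      have h1 : (1 + η₁) / (ψf * C) - 1 = 1 / η₁ := by
        rw [hη]
        field_simp
        ring
      linarith [hstep]
    have hEpos : 0 < A / B ^ 2 * ((1 + η₁) / ψf) - 1 := by
      have : 0 < 1 / η₁ := by positivity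
      linarith
    refine ⟨hEpos, ?_⟩
    rw [hf x₀]
    have := one_div_le_one_div_of_le (by positivity : (0:ℝ) < 1 / η₁) hlow
    rw [one_div_one_div] at this
    simpa [one_div] using this
  refine ⟨main, ?_⟩
  rw [hf w₁, hQww, hη]
  have h1 : C / C ^ 2 * ((1 + ψf * C) / ψf) - 1 = 1 / (ψf * C) := by
    field_simp
    ring
  rw [h1]
  simp [one_div, mul_inv, inv_inv]
end

section
/- Let Ψ̄_id be diagonal positive definite, w₁ ∈ ℝ^N, ψ̄_f > 0, and set η₁ = ψ̄_f w₁ᵀ Ψ̄_id^{-1} w₁. For γ > 0 and x₀ ∈ ℝ^N with w₁ᵀ Ψ̄_id^{-1} x₀ ≠ 0, one has x₀ᵀ (Ψ̄_id + γ ψ̄_f w₁ w₁ᵀ)^{-1} x₀ / x₀ᵀ (Ψ̄_id + ψ̄_f w₁ w₁ᵀ)^{-1} x₀ = 1 + ((1 − γ)/(1 + η₁ γ)) · ((x₀ᵀ Ψ̄_id^{-1} x₀)/(w₁ᵀ Ψ̄_id^{-1} x₀)² · (1+η₁)/ψ̄_f − 1)^{-1}. -/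
open Matrix

lemma myVecMulVec_mulVec {N : ℕ} (u v x : Fin N → ℝ) :
    vecMulVec u v *ᵥ x = (v ⬝ᵥ x) • u := by
  ext i
  simp [mulVec, vecMulVec_apply, dotProduct, Finset.sum_mul, Finset.mul_sum,
    mul_comm, mul_assoc, mul_left_comm]

lemma myMul_vecMulVec {N : ℕ} (A : Matrix (Fin N) (Fin N) ℝ) (u v : Fin N → ℝ) :
    A * vecMulVec u v = vecMulVec (A *ᵥ u) v := by
  ext i j
  simp [mul_apply, vecMulVec_apply, mulVec, dotProduct, Finset.sum_mul, mul_assoc]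

lemma myVecMulVec_mul {N : ℕ} (u v : Fin N → ℝ) (A : Matrix (Fin N) (Fin N) ℝ) :
    vecMulVec u v * A = vecMulVec u (v ᵥ* A) := by
  ext i j
  simp [mul_apply, vecMulVec_apply, vecMul, dotProduct, Finset.mul_sum, mul_assoc]

lemma mySmul_vecMulVec {N : ℕ} (c : ℝ) (u v : Fin N → ℝ) :
    vecMulVec (c • u) v = c • vecMulVec u v := by
  ext i j
  simp [vecMulVec_apply, mul_assoc]

lemma mySmul_vecMulVec' {N : ℕ} (c : ℝ) (u v : Fin N → ℝ) :
    vecMulVec u (c • v) = c • vecMulVec u v := by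
  ext i j
  simp [vecMulVec_apply]
  ring

lemma myDiagInv {N : ℕ} (ψid : Fin N → ℝ) (hψid : ∀ i, 0 < ψid i) :
    (diagonal ψid)⁻¹ = diagonal (fun i => (ψid i)⁻¹) := by
  apply inv_eq_right_inv
  rw [diagonal_mul_diagonal]
  convert diagonal_one with i
  exact mul_inv_cancel₀ (hψid i).ne'

/-- Sherman–Morrison quadratic form. -/
lemma myQuad {N : ℕ} (ψid : Fin N → ℝ) (hψid : ∀ i, 0 < ψid i)
    (w x : Fin N → ℝ) (c : ℝ)
    (hc : 1 + c * (w ⬝ᵥ ((diagonal ψid)⁻¹ *ᵥ w)) ≠ 0) :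
    x ⬝ᵥ ((diagonal ψid + c • vecMulVec w w)⁻¹ *ᵥ x) =
      x ⬝ᵥ ((diagonal ψid)⁻¹ *ᵥ x) -
        c * (w ⬝ᵥ ((diagonal ψid)⁻¹ *ᵥ x)) ^ 2 /
          (1 + c * (w ⬝ᵥ ((diagonal ψid)⁻¹ *ᵥ w))) := by
  set d : Fin N → ℝ := fun i => (ψid i)⁻¹ with hd
  have hDinv := myDiagInv ψid hψid
  set u : Fin N → ℝ := fun i => d i * w i with hu
  have hMu : (diagonal ψid)⁻¹ *ᵥ w = u := by
    rw [hDinv]; ext i; simp [mulVec_diagonal, u, d]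
  set s : ℝ := w ⬝ᵥ u with hs
  rw [hMu] at hc ⊢
  set k : ℝ := c / (1 + c * s) with hk
  have hinv : (diagonal ψid + c • vecMulVec w w)⁻¹ =
      diagonal d - k • vecMulVec u u := by
    apply inv_eq_right_inv
    have h1 : diagonal ψid * diagonal d = 1 := by
      rw [diagonal_mul_diagonal]
      convert diagonal_one with i
      exact mul_inv_cancel₀ (hψid i).ne'
    have hwu : diagonal ψid *ᵥ u = w := by
      ext i
      simp [mulVec_diagonal, u, d, mul_inv_cancel_left₀ (hψid i).ne']
    have h2 : diagonal ψid * vecMulVec u u = vecMulVec w u := by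
      rw [myMul_vecMulVec, hwu]
    have hvd : w ᵥ* diagonal d = u := by
      ext j
      simp [vecMul_diagonal, u, d, mul_comm]
    have h3 : vecMulVec w w * diagonal d = vecMulVec w u := by
      rw [myVecMulVec_mul, hvd]
    have h4 : vecMulVec w w * vecMulVec u u = s • vecMulVec w u := by
      rw [myVecMulVec_mul]
      have : w ᵥ* vecMulVec u u = s • u := by
        ext j
        simp only [vecMul, dotProduct, vecMulVec_apply, Pi.smul_apply, smul_eq_mul, hs]
        rw [Finset.sum_mul]
        exact Finset.sum_congr rfl fun i _ => by ring
      rw [this, mySmul_vecMulVec']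
    rw [Matrix.add_mul, Matrix.mul_sub, Matrix.mul_sub, Matrix.mul_smul, Matrix.mul_smul,
      Matrix.smul_mul, Matrix.smul_mul, h1, h2, h3, h4, smul_smul, smul_smul]
    have hck : c - (k + k * c * s) = 0 := by
      have hcs : 1 + c * s ≠ 0 := hc
      have : k * (1 + c * s) = c := div_mul_cancel₀ c hcs
      linear_combination -this
    have : (1 : Matrix (Fin N) (Fin N) ℝ) - k • vecMulVec w u +
        (c • vecMulVec w u - (k * c * s) • vecMulVec w u) =
        1 + (c - (k + k * c * s)) • vecMulVec w u := by
      rw [sub_smul, add_smul]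
      abel
    rw [this, hck, zero_smul, add_zero]
  rw [hinv, hDinv]
  rw [sub_mulVec, dotProduct_sub, smul_mulVec, myVecMulVec_mulVec]
  have hb : u ⬝ᵥ x = w ⬝ᵥ (diagonal (fun i => (ψid i)⁻¹) *ᵥ x) := by
    simp [dotProduct, mulVec_diagonal, u, d, mul_comm, mul_assoc, mul_left_comm]
  have hxu : x ⬝ᵥ u = u ⬝ᵥ x := dotProduct_comm x u
  rw [dotProduct_smul, dotProduct_smul, hxu, hb, smul_eq_mul, smul_eq_mul, hk]
  ring

set_option maxHeartbeats 1600000 in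
/-- Key identity of the exact cost-ratio formula with a single index fund (`K = 1`):
for `γ > 0` and `w₁ᵀ Ψ̄id⁻¹ x₀ ≠ 0`,
`x₀ᵀ (Ψ̄id + γ ψ̄f w₁w₁ᵀ)⁻¹ x₀ / x₀ᵀ (Ψ̄id + ψ̄f w₁w₁ᵀ)⁻¹ x₀
  = 1 + (1−γ)/(1+η₁γ) · ((x₀ᵀΨ̄id⁻¹x₀)/(w₁ᵀΨ̄id⁻¹x₀)² · (1+η₁)/ψ̄f − 1)⁻¹`. -/
theorem stmt15 {N : ℕ}
    (ψid : Fin N → ℝ) (hψid : ∀ i, 0 < ψid i)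
    (w₁ : Fin N → ℝ) (ψf : ℝ) (hψf : 0 < ψf)
    (η₁ : ℝ) (hη₁ : η₁ = ψf * (w₁ ⬝ᵥ ((diagonal ψid)⁻¹ *ᵥ w₁)))
    (γ : ℝ) (hγ : 0 < γ)
    (x₀ : Fin N → ℝ) (hx₀ : w₁ ⬝ᵥ ((diagonal ψid)⁻¹ *ᵥ x₀) ≠ 0) :
    (x₀ ⬝ᵥ ((diagonal ψid + (γ * ψf) • vecMulVec w₁ w₁)⁻¹ *ᵥ x₀)) /
      (x₀ ⬝ᵥ ((diagonal ψid + ψf • vecMulVec w₁ w₁)⁻¹ *ᵥ x₀)) =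
    1 + ((1 - γ) / (1 + η₁ * γ)) *
      ((x₀ ⬝ᵥ ((diagonal ψid)⁻¹ *ᵥ x₀)) / (w₁ ⬝ᵥ ((diagonal ψid)⁻¹ *ᵥ x₀)) ^ 2 *
        ((1 + η₁) / ψf) - 1)⁻¹ := by
  have hDinv := myDiagInv ψid hψid
  set a : ℝ := x₀ ⬝ᵥ ((diagonal ψid)⁻¹ *ᵥ x₀) with ha
  set b : ℝ := w₁ ⬝ᵥ ((diagonal ψid)⁻¹ *ᵥ x₀) with hb
  set s : ℝ := w₁ ⬝ᵥ ((diagonal ψid)⁻¹ *ᵥ w₁) with hs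
  -- basic sum expressions
  have hsum_a : a = ∑ i, (ψid i)⁻¹ * x₀ i ^ 2 := by
    rw [ha, hDinv]
    simp only [dotProduct, mulVec_diagonal]
    exact Finset.sum_congr rfl fun i _ => by ring
  have hsum_s : s = ∑ i, (ψid i)⁻¹ * w₁ i ^ 2 := by
    rw [hs, hDinv]
    simp only [dotProduct, mulVec_diagonal]
    exact Finset.sum_congr rfl fun i _ => by ring
  have hsum_b : b = ∑ i, ((ψid i)⁻¹ * w₁ i) * x₀ i := by
    rw [hb, hDinv]
    simp only [dotProduct, mulVec_diagonal]
    exact Finset.sum_congr rfl fun i _ => by ring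
  -- nonnegativity and Cauchy–Schwarz
  have hs0 : 0 ≤ s := by
    rw [hsum_s]
    exact Finset.sum_nonneg fun i _ => mul_nonneg (inv_nonneg.mpr (hψid i).le) (sq_nonneg _)
  have hCS : b ^ 2 ≤ s * a := by
    have key : ∀ i : Fin N, Real.sqrt (ψid i)⁻¹ * Real.sqrt (ψid i)⁻¹ = (ψid i)⁻¹ :=
      fun i => Real.mul_self_sqrt (inv_nonneg.mpr (hψid i).le)
    have h1 : b = ∑ i, (Real.sqrt (ψid i)⁻¹ * w₁ i) * (Real.sqrt (ψid i)⁻¹ * x₀ i) := by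
      rw [hsum_b]
      refine Finset.sum_congr rfl fun i _ => ?_
      conv_lhs => rw [← key i]
      ring
    have h2 : s = ∑ i, (Real.sqrt (ψid i)⁻¹ * w₁ i) ^ 2 := by
      rw [hsum_s]
      refine Finset.sum_congr rfl fun i _ => ?_
      rw [mul_pow, sq (Real.sqrt (ψid i)⁻¹), key i]
    have h3 : a = ∑ i, (Real.sqrt (ψid i)⁻¹ * x₀ i) ^ 2 := by
      rw [hsum_a]
      refine Finset.sum_congr rfl fun i _ => ?_
      rw [mul_pow, sq (Real.sqrt (ψid i)⁻¹), key i]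
    rw [h1, h2, h3]
    exact Finset.sum_mul_sq_le_sq_mul_sq Finset.univ _ _
  have hb2 : 0 < b ^ 2 := by positivity
  have hspos : 0 < s := by
    rcases hs0.lt_or_eq with h | h
    · exact h
    · exfalso; rw [← h, zero_mul] at hCS; linarith
  have hapos : 0 < a := by nlinarith
  have hc1 : (0:ℝ) < 1 + γ * ψf * s := by
    nlinarith [mul_nonneg (mul_nonneg hγ.le hψf.le) hs0]
  have hc2 : (0:ℝ) < 1 + ψf * s := by
    nlinarith [mul_nonneg hψf.le hs0]
  have hq1 := myQuad ψid hψid w₁ x₀ (γ * ψf) hc1.ne'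
  have hq2 := myQuad ψid hψid w₁ x₀ ψf hc2.ne'
  rw [← hb, ← hs, ← ha] at hq1 hq2
  rw [hq1, hq2, hη₁]
  have key : ψf * b ^ 2 < a * (1 + ψf * s) := by
    nlinarith [mul_nonneg hψf.le (sub_nonneg.mpr hCS)]
  have hden2 : (0:ℝ) < a - ψf * b ^ 2 / (1 + ψf * s) := by
    rw [sub_pos, div_lt_iff₀ hc2]
    exact key
  have hE : (0:ℝ) < a / b ^ 2 * ((1 + ψf * s) / ψf) - 1 := by
    rw [sub_pos, div_mul_div_comm, lt_div_iff₀ (mul_pos hb2 hψf)]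
    nlinarith [key]
  have hden2' : a - ψf * b ^ 2 / (1 + ψf * s) ≠ 0 := ne_of_gt hden2
  have hE' : a / b ^ 2 * ((1 + ψf * s) / ψf) - 1 ≠ 0 := ne_of_gt hE
  have h3 : (1:ℝ) + ψf * s * γ ≠ 0 := by
    nlinarith [mul_nonneg (mul_nonneg hψf.le hs0) hγ.le]
  have h4 : (0:ℝ) < a * (1 + ψf * s) - ψf * b ^ 2 := by nlinarith [key]
  have hEeq : (a / b ^ 2 * ((1 + ψf * s) / ψf) - 1)⁻¹ =
      ψf * b ^ 2 / (a * (1 + ψf * s) - ψf * b ^ 2) := by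
    rw [show a / b ^ 2 * ((1 + ψf * s) / ψf) - 1
        = (a * (1 + ψf * s) - ψf * b ^ 2) / (ψf * b ^ 2) by
      field_simp]
    rw [inv_div]
  have hnum : a - γ * ψf * b ^ 2 / (1 + γ * ψf * s)
      = (a * (1 + γ * ψf * s) - γ * ψf * b ^ 2) / (1 + γ * ψf * s) := by
    field_simp
  have hden : a - ψf * b ^ 2 / (1 + ψf * s)
      = (a * (1 + ψf * s) - ψf * b ^ 2) / (1 + ψf * s) := by
    field_simp
  rw [hEeq, hnum, hden]
  rw [div_div_div_comm]
  field_simp [hc1.ne', hc2.ne', h3, h4.ne']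
  ring
end

section
/- Let α_t, β_t > 0 with Σ_t α_t = Σ_t β_t = 1, γ_t = β_t/α_t, θ ∈ [0,1], η₁ ≥ 0, and Δ(θ) = Σ_{t=1}^T α_t (1 − θ(1−γ_t))² (1−γ_t)/(1 + η₁ γ_t). Then Δ(0) ≥ 0 and Δ(1) ≤ 0. -/
open Finset

/-!
Write `Δ(θ) = Σ_t α_t h(γ_t) (1 − γ_t)` with `h(γ) = 1/(1 + η₁γ)` at `θ = 0` and
`h(γ) = γ²/(1 + η₁γ)` at `θ = 1`. A monotone `h` satisfies `h(γ)(1 − γ) ≤ h(1)(1 − γ)`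
(both sides change sign at `γ = 1`), and summing against the weights `α_t` kills the right-hand
side because `Σ_t α_t (1 − γ_t) = Σ_t (α_t − β_t) = 0`. The first `h` is antitone and the second
monotone on `[0, ∞)`, giving the two signs.
-/

lemma MonotoneOn.mul_one_sub_le {h : ℝ → ℝ} {s : Set ℝ} (hh : MonotoneOn h s)
    (h1 : (1 : ℝ) ∈ s) {x : ℝ} (hx : x ∈ s) : h x * (1 - x) ≤ h 1 * (1 - x) := by
  rcases le_total x 1 with hx1 | hx1
  · exact mul_le_mul_of_nonneg_right (hh hx h1 hx1) (by linarith)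
  · exact mul_le_mul_of_nonpos_right (hh h1 hx hx1) (by linarith)

section WeightedSum

variable {ι : Type*} [Fintype ι] {α γ : ι → ℝ} {h : ℝ → ℝ} {s : Set ℝ}

lemma sum_mul_one_sub_div_eq_zero {β : ι → ℝ} (hα : ∀ t, α t ≠ 0)
    (hαβ : ∑ t, α t = ∑ t, β t) : ∑ t, α t * (1 - β t / α t) = 0 := by
  have hterm : ∀ t, α t * (1 - β t / α t) = α t - β t := fun t => by
    rw [mul_sub, mul_div_cancel₀ _ (hα t), mul_one]
  simp only [hterm, sum_sub_distrib, hαβ, sub_self]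

lemma MonotoneOn.sum_mul_mul_one_sub_nonpos (hh : MonotoneOn h s) (h1 : (1 : ℝ) ∈ s)
    (hα : ∀ t, 0 ≤ α t) (hγ : ∀ t, γ t ∈ s) (hsum : ∑ t, α t * (1 - γ t) = 0) :
    ∑ t, α t * h (γ t) * (1 - γ t) ≤ 0 :=
  calc ∑ t, α t * h (γ t) * (1 - γ t)
      ≤ ∑ t, α t * (h 1 * (1 - γ t)) := sum_le_sum fun t _ => by
        rw [mul_assoc]
        exact mul_le_mul_of_nonneg_left (hh.mul_one_sub_le h1 (hγ t)) (hα t)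
    _ = h 1 * ∑ t, α t * (1 - γ t) := by
        rw [mul_sum]
        exact sum_congr rfl fun t _ => by ring
    _ = 0 := by rw [hsum, mul_zero]

lemma AntitoneOn.sum_mul_mul_one_sub_nonneg (hh : AntitoneOn h s) (h1 : (1 : ℝ) ∈ s)
    (hα : ∀ t, 0 ≤ α t) (hγ : ∀ t, γ t ∈ s) (hsum : ∑ t, α t * (1 - γ t) = 0) :
    0 ≤ ∑ t, α t * h (γ t) * (1 - γ t) := by
  simpa only [mul_neg, neg_mul, sum_neg_distrib, neg_nonpos] using
    hh.neg.sum_mul_mul_one_sub_nonpos h1 hα hγ hsum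

end WeightedSum

lemma antitoneOn_one_div_one_add_mul {η : ℝ} (hη : 0 ≤ η) :
    AntitoneOn (fun x => 1 / (1 + η * x)) (Set.Ici 0) :=
  fun x (hx : 0 ≤ x) y _ hxy =>
    one_div_le_one_div_of_le (by positivity) (by nlinarith [mul_le_mul_of_nonneg_left hxy hη])

lemma monotoneOn_sq_div_one_add_mul {η : ℝ} (hη : 0 ≤ η) :
    MonotoneOn (fun x => x ^ 2 / (1 + η * x)) (Set.Ici 0) :=
  fun x (hx : 0 ≤ x) y (hy : 0 ≤ y) hxy => by
    rw [div_le_div_iff₀ (by positivity) (by positivity)]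
    nlinarith [mul_le_mul_of_nonneg_left hxy (mul_nonneg (mul_nonneg hη hx) hy),
      mul_le_mul hxy hxy hx hy]

/-- With `γ_t = β_t/α_t` and
`Δ(θ) = Σ_t α_t (1 − θ(1−γ_t))² (1−γ_t)/(1 + η₁ γ_t)`, one has `Δ(0) ≥ 0` and
`Δ(1) ≤ 0`. -/
theorem stmt16 {T : ℕ}
    (α β : Fin T → ℝ) (hα : ∀ t, 0 < α t) (hβ : ∀ t, 0 < β t)
    (hαsum : ∑ t, α t = 1) (hβsum : ∑ t, β t = 1)
    (η₁ : ℝ) (hη₁ : 0 ≤ η₁)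
    (γ : Fin T → ℝ) (hγ : ∀ t, γ t = β t / α t)
    (Δ : ℝ → ℝ)
    (hΔ : ∀ θ : ℝ, Δ θ =
      ∑ t, α t * (1 - θ * (1 - γ t)) ^ 2 * (1 - γ t) / (1 + η₁ * γ t)) :
    0 ≤ Δ 0 ∧ Δ 1 ≤ 0 := by
  have hα₀ : ∀ t, 0 ≤ α t := fun t => (hα t).le
  have hγ₀ : ∀ t, γ t ∈ Set.Ici 0 := fun t => by
    rw [hγ]
    exact (div_pos (hβ t) (hα t)).le
  have hsum : ∑ t, α t * (1 - γ t) = 0 := by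
    simp only [hγ]
    exact sum_mul_one_sub_div_eq_zero (fun t => (hα t).ne') (hαsum.trans hβsum.symm)
  have h1 : (1 : ℝ) ∈ Set.Ici 0 := Set.mem_Ici.mpr zero_le_one
  constructor
  · convert (antitoneOn_one_div_one_add_mul hη₁).sum_mul_mul_one_sub_nonneg h1 hα₀ hγ₀ hsum
      using 1
    rw [hΔ]
    exact sum_congr rfl fun t _ => by ring
  · convert (monotoneOn_sq_div_one_add_mul hη₁).sum_mul_mul_one_sub_nonpos h1 hα₀ hγ₀ hsum
      using 1
    rw [hΔ]
    exact sum_congr rfl fun t _ => by ring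
end

section
/- Let α_t, β_t > 0 with Σ_t α_t = Σ_t β_t = 1 and γ_t = β_t/α_t, θ ∈ (0,1), and define Υ_market(η₁) = 1 + θ²(Σ_t β_t²/α_t − 1) + η₁ Σ_t α_t (1 − θ(1−γ_t))²(1−γ_t)/(1+η₁γ_t) for η₁ ≥ 0. Then Υ_market(θ/(1−θ)) = 1 and lim_{η₁→∞} Υ_market(η₁) = 1 + (1−θ)² (Σ_{t=1}^T α_t²/β_t − 1). -/
open Finset Filter Topology

/-!
Write `γ = β/α`. At `η₁ = θ/(1-θ)` the denominator `1 + η₁γ_t` equals `(1 - θ(1-γ_t))/(1-θ)` and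
cancels one factor of the numerator, so each summand becomes
`θ(1-θ)(α_t - β_t) + θ²(β_t - β_t²/α_t)`; summing, the first part vanishes and the second cancels
the `θ²(Σ β²/α - 1)` term. As `η₁ → ∞`, `η₁/(1 + η₁γ_t) → 1/γ_t`, and expanding
`α_t(1-θ(1-γ_t))²(1-γ_t)/γ_t` in powers of `θ` and `1-θ` gives the limit the same way.
-/

lemma tendsto_div_one_add_mul_atTop {c : ℝ} (hc : c ≠ 0) :
    Tendsto (fun x : ℝ => x / (1 + x * c)) atTop (𝓝 c⁻¹) := by
  have h : Tendsto (fun x : ℝ => (x⁻¹ + c)⁻¹) atTop (𝓝 c⁻¹) := by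
    simpa using (tendsto_inv_atTop_zero.add_const c).inv₀ (by simpa using hc)
  refine h.congr' ?_
  filter_upwards [eventually_ne_atTop 0] with x hx
  field_simp

lemma tendsto_mul_sum_div_one_add_mul_atTop {ι : Type*} (s : Finset ι) (f g : ι → ℝ)
    (hg : ∀ i ∈ s, g i ≠ 0) :
    Tendsto (fun x : ℝ => x * ∑ i ∈ s, f i / (1 + x * g i)) atTop (𝓝 (∑ i ∈ s, f i / g i)) := by
  have h : Tendsto (fun x : ℝ => ∑ i ∈ s, f i * (x / (1 + x * g i))) atTop
      (𝓝 (∑ i ∈ s, f i * (g i)⁻¹)) :=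
    tendsto_finsetSum s fun i hi =>
      tendsto_const_nhds.mul (tendsto_div_one_add_mul_atTop (hg i hi))
  simp only [div_eq_mul_inv] at h ⊢
  refine h.congr fun x => ?_
  rw [Finset.mul_sum]
  exact Finset.sum_congr rfl fun i _ => by ring

section Summands

variable {a b θ : ℝ}

lemma summand_at_critical (ha : 0 < a) (hb : 0 < b) (hθ : θ ∈ Set.Ioo (0 : ℝ) 1) :
    θ / (1 - θ) * (a * (1 - θ * (1 - b / a)) ^ 2 * (1 - b / a) / (1 + θ / (1 - θ) * (b / a))) =
      θ * (1 - θ) * (a - b) + θ ^ 2 * (b - b ^ 2 / a) := by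
  obtain ⟨hθ0, hθ1⟩ := hθ
  have h1θ : 1 - θ ≠ 0 := by linarith
  have hden : a * (1 - θ) + θ * b ≠ 0 := by positivity [sub_pos.2 hθ1]
  field_simp
  ring

lemma summand_div_eq (ha : a ≠ 0) (hb : b ≠ 0) :
    a * (1 - θ * (1 - b / a)) ^ 2 * (1 - b / a) / (b / a) =
      (1 - θ) ^ 2 * (a ^ 2 / b - a) + 2 * θ * (1 - θ) * (a - b) + θ ^ 2 * (b - b ^ 2 / a) := by
  field_simp
  ring

end Summands

/-- For the market-portfolio cost ratio
`Υ(η₁) = 1 + θ²(Σ β²/α − 1) + η₁ Σ α_t (1−θ(1−γ_t))²(1−γ_t)/(1+η₁γ_t)`,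
one has `Υ(θ/(1−θ)) = 1` and `Υ(η₁) → 1 + (1−θ)²(Σ α²/β − 1)` as `η₁ → ∞`. -/
theorem stmt17 {T : ℕ}
    (α β : Fin T → ℝ) (hα : ∀ t, 0 < α t) (hβ : ∀ t, 0 < β t)
    (hαsum : ∑ t, α t = 1) (hβsum : ∑ t, β t = 1)
    (γ : Fin T → ℝ) (hγ : ∀ t, γ t = β t / α t)
    (θ : ℝ) (hθ : θ ∈ Set.Ioo (0 : ℝ) 1)
    (Υ : ℝ → ℝ)
    (hΥ : ∀ η₁ : ℝ, Υ η₁ =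
      1 + θ ^ 2 * ((∑ t, (β t) ^ 2 / α t) - 1) +
        η₁ * ∑ t, α t * (1 - θ * (1 - γ t)) ^ 2 * (1 - γ t) / (1 + η₁ * γ t)) :
    Υ (θ / (1 - θ)) = 1 ∧
    Tendsto Υ atTop (𝓝 (1 + (1 - θ) ^ 2 * ((∑ t, (α t) ^ 2 / β t) - 1))) := by
  obtain rfl : γ = fun t => β t / α t := funext hγ
  constructor
  · rw [hΥ, Finset.mul_sum, Finset.sum_congr rfl fun t _ => summand_at_critical (hα t) (hβ t) hθ]
    simp only [Finset.sum_add_distrib, Finset.sum_sub_distrib, ← Finset.mul_sum, hαsum, hβsum]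
    ring
  · have hlim := tendsto_mul_sum_div_one_add_mul_atTop univ
      (fun t => α t * (1 - θ * (1 - β t / α t)) ^ 2 * (1 - β t / α t)) (fun t => β t / α t)
      fun t _ => (div_pos (hβ t) (hα t)).ne'
    rw [Finset.sum_congr rfl fun t _ => summand_div_eq (θ := θ) (hα t).ne' (hβ t).ne'] at hlim
    simp only [Finset.sum_add_distrib, Finset.sum_sub_distrib, ← Finset.mul_sum, hαsum, hβsum]
      at hlim
    rw [funext hΥ]
    convert tendsto_const_nhds.add hlim using 2
    ring
end

section
/- Let α_t, β_t > 0 with Σ_t α_t = Σ_t β_t = 1, γ_t = β_t/α_t, θ ∈ (0,1), and Υ_market(η₁) as above. Then Υ_market is non-increasing on [0, θ/(1−θ)] and non-decreasing on [θ/(1−θ), ∞); equivalently, its derivative in η₁ equals (θ²/η₁²) Σ_t α_t (1 + (θ^{-1} − 1 − η₁^{-1})/(η₁^{-1} + γ_t))² (1 − γ_t), which is ≤ 0 for η₁ ≤ θ/(1−θ) and ≥ 0 for η₁ ≥ θ/(1−θ). -/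
open Finset Set

/-- The market-portfolio cost ratio `Υ(η₁)` is non-increasing on `[0, θ/(1−θ)]` and
non-decreasing on `[θ/(1−θ), ∞)`; for `η₁ > 0` its derivative equals
`(θ²/η₁²) Σ_t α_t (1 + (θ⁻¹ − 1 − η₁⁻¹)/(η₁⁻¹ + γ_t))² (1 − γ_t)`, which is `≤ 0` for
`η₁ ≤ θ/(1−θ)` and `≥ 0` for `η₁ ≥ θ/(1−θ)`. -/
theorem stmt18 {T : ℕ}
    (α β : Fin T → ℝ) (hα : ∀ t, 0 < α t) (hβ : ∀ t, 0 < β t)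
    (hαsum : ∑ t, α t = 1) (hβsum : ∑ t, β t = 1)
    (γ : Fin T → ℝ) (hγ : ∀ t, γ t = β t / α t)
    (θ : ℝ) (hθ : θ ∈ Set.Ioo (0 : ℝ) 1)
    (Υ : ℝ → ℝ)
    (hΥ : ∀ η₁ : ℝ, Υ η₁ =
      1 + θ ^ 2 * ((∑ t, (β t) ^ 2 / α t) - 1) +
        η₁ * ∑ t, α t * (1 - θ * (1 - γ t)) ^ 2 * (1 - γ t) / (1 + η₁ * γ t)) :
    AntitoneOn Υ (Set.Icc 0 (θ / (1 - θ))) ∧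
    MonotoneOn Υ (Set.Ici (θ / (1 - θ))) ∧
    (∀ η₁ : ℝ, 0 < η₁ →
      deriv Υ η₁ =
        θ ^ 2 / η₁ ^ 2 *
          ∑ t, α t * (1 + (θ⁻¹ - 1 - η₁⁻¹) / (η₁⁻¹ + γ t)) ^ 2 * (1 - γ t) ∧
      (η₁ ≤ θ / (1 - θ) →
        θ ^ 2 / η₁ ^ 2 *
          ∑ t, α t * (1 + (θ⁻¹ - 1 - η₁⁻¹) / (η₁⁻¹ + γ t)) ^ 2 * (1 - γ t) ≤ 0) ∧
      (θ / (1 - θ) ≤ η₁ →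
        0 ≤ θ ^ 2 / η₁ ^ 2 *
          ∑ t, α t * (1 + (θ⁻¹ - 1 - η₁⁻¹) / (η₁⁻¹ + γ t)) ^ 2 * (1 - γ t))) := by
  obtain ⟨hθ0, hθ1⟩ := hθ
  have h1θ : (0:ℝ) < 1 - θ := by linarith
  have hγpos : ∀ t, 0 < γ t := fun t => by rw [hγ t]; exact div_pos (hβ t) (hα t)
  set c : Fin T → ℝ := fun t => α t * (1 - θ * (1 - γ t)) ^ 2 * (1 - γ t) with hc
  have hsum0 : ∑ t, α t * (1 - γ t) = 0 := by
    have he : ∀ t : Fin T, α t * (1 - γ t) = α t - β t := by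
      intro t
      rw [hγ t]
      field_simp [(hα t).ne']
    rw [Finset.sum_congr rfl (fun t _ => he t), Finset.sum_sub_distrib, hαsum, hβsum, sub_self]
  have hD : ∀ η : ℝ, 0 ≤ η → HasDerivAt Υ (∑ t, c t / (1 + η * γ t) ^ 2) η := by
    intro η hη
    have hne : ∀ t, (1 + η * γ t) ≠ 0 := fun t => by
      nlinarith [mul_nonneg hη (hγpos t).le]
    have hEq : Υ = fun x : ℝ => 1 + θ ^ 2 * ((∑ t, (β t) ^ 2 / α t) - 1) +
        ∑ t, c t * (x / (1 + x * γ t)) := by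
      funext x
      rw [hΥ x, Finset.mul_sum]
      congr 1
      refine Finset.sum_congr rfl fun t _ => ?_
      simp only [hc]
      ring
    rw [hEq]
    apply HasDerivAt.const_add
    have hterm : ∀ t ∈ Finset.univ, HasDerivAt (fun x : ℝ => c t * (x / (1 + x * γ t)))
        (c t / (1 + η * γ t) ^ 2) η := by
      intro t _
      have h1 : HasDerivAt (fun x : ℝ => 1 + x * γ t) (γ t) η := by
        simpa using ((hasDerivAt_id η).mul_const (γ t)).const_add 1
      have h2 := ((hasDerivAt_id η).div h1 (hne t)).const_mul (c t)
      refine h2.congr_deriv ?_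
      simp only [id]; ring
    simpa using HasDerivAt.fun_sum hterm
  -- per-term identity
  have hident : ∀ (η : ℝ) (t : Fin T),
      (1 + η * γ t) ≠ 0 → (1 + η) ≠ 0 →
      c t / (1 + η * γ t) ^ 2 - α t * (1 - γ t) / (1 + η) ^ 2 =
        -(α t * (((1 - θ + θ * γ t) * (1 + η) + (1 + η * γ t)) * (θ - η * (1 - θ)) *
          (1 - γ t) ^ 2)) / ((1 + η * γ t) ^ 2 * (1 + η) ^ 2) := by
    intro η t h1 h2
    simp only [hc]
    rw [div_sub_div _ _ (pow_ne_zero 2 h1) (pow_ne_zero 2 h2)]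
    congr 1
    ring
  have hnumpos : ∀ (η : ℝ) (t : Fin T), 0 ≤ η →
      0 < (1 - θ + θ * γ t) * (1 + η) + (1 + η * γ t) := by
    intro η t hη
    have hg := hγpos t
    nlinarith [mul_nonneg hη hg.le, mul_pos hθ0 hg]
  have hsign_le : ∀ η : ℝ, 0 ≤ η → η * (1 - θ) ≤ θ →
      (∑ t, c t / (1 + η * γ t) ^ 2) ≤ 0 := by
    intro η hη hle
    have step : ∑ t, c t / (1 + η * γ t) ^ 2 ≤ ∑ t, α t * (1 - γ t) / (1 + η) ^ 2 := by
      apply Finset.sum_le_sum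
      intro t _
      have hg := hγpos t
      have hd1 : (0:ℝ) < 1 + η * γ t := by nlinarith [mul_nonneg hη hg.le]
      have hd2 : (0:ℝ) < 1 + η := by linarith
      have hid := hident η t hd1.ne' hd2.ne'
      have hnum : 0 ≤ α t * (((1 - θ + θ * γ t) * (1 + η) + (1 + η * γ t)) *
          (θ - η * (1 - θ)) * (1 - γ t) ^ 2) := by
        apply mul_nonneg (hα t).le
        exact mul_nonneg (mul_nonneg (hnumpos η t hη).le (by linarith)) (sq_nonneg _)
      have : c t / (1 + η * γ t) ^ 2 - α t * (1 - γ t) / (1 + η) ^ 2 ≤ 0 := by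
        rw [hid]
        exact div_nonpos_of_nonpos_of_nonneg (neg_nonpos.mpr hnum) (by positivity)
      linarith
    calc ∑ t, c t / (1 + η * γ t) ^ 2 ≤ ∑ t, α t * (1 - γ t) / (1 + η) ^ 2 := step
      _ = (∑ t, α t * (1 - γ t)) / (1 + η) ^ 2 := by rw [Finset.sum_div]
      _ = 0 := by rw [hsum0, zero_div]
  have hsign_ge : ∀ η : ℝ, 0 ≤ η → θ ≤ η * (1 - θ) →
      0 ≤ (∑ t, c t / (1 + η * γ t) ^ 2) := by
    intro η hη hle
    have step : ∑ t, α t * (1 - γ t) / (1 + η) ^ 2 ≤ ∑ t, c t / (1 + η * γ t) ^ 2 := by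
      apply Finset.sum_le_sum
      intro t _
      have hg := hγpos t
      have hd1 : (0:ℝ) < 1 + η * γ t := by nlinarith [mul_nonneg hη hg.le]
      have hd2 : (0:ℝ) < 1 + η := by linarith
      have hid := hident η t hd1.ne' hd2.ne'
      have hnum : α t * (((1 - θ + θ * γ t) * (1 + η) + (1 + η * γ t)) *
          (θ - η * (1 - θ)) * (1 - γ t) ^ 2) ≤ 0 := by
        apply mul_nonpos_of_nonneg_of_nonpos (hα t).le
        apply mul_nonpos_of_nonpos_of_nonneg _ (sq_nonneg _)
        exact mul_nonpos_of_nonneg_of_nonpos (hnumpos η t hη).le (by linarith)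
      have : 0 ≤ c t / (1 + η * γ t) ^ 2 - α t * (1 - γ t) / (1 + η) ^ 2 := by
        rw [hid]
        exact div_nonneg (neg_nonneg.mpr hnum) (by positivity)
      linarith
    have : (0:ℝ) = ∑ t, α t * (1 - γ t) / (1 + η) ^ 2 := by
      rw [← Finset.sum_div, hsum0, zero_div]
    linarith
  have halg : ∀ η : ℝ, 0 < η →
      θ ^ 2 / η ^ 2 * ∑ t, α t * (1 + (θ⁻¹ - 1 - η⁻¹) / (η⁻¹ + γ t)) ^ 2 * (1 - γ t) =
      ∑ t, c t / (1 + η * γ t) ^ 2 := by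
    intro η hη
    rw [Finset.mul_sum]
    refine Finset.sum_congr rfl fun t _ => ?_
    have hg := hγpos t
    have h1 : (η⁻¹ + γ t) ≠ 0 := (add_pos (inv_pos.mpr hη) hg).ne'
    have h2 : (1 + η * γ t) ≠ 0 := by nlinarith [mul_pos hη hg]
    simp only [hc]
    field_simp
    ring
  refine ⟨?_, ?_, ?_⟩
  · apply antitoneOn_of_deriv_nonpos (convex_Icc _ _)
    · exact fun x hx => (hD x hx.1).differentiableAt.continuousAt.continuousWithinAt
    · intro x hx
      rw [interior_Icc] at hx
      exact (hD x hx.1.le).differentiableAt.differentiableWithinAt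
    · intro x hx
      rw [interior_Icc] at hx
      rw [(hD x hx.1.le).deriv]
      exact hsign_le x hx.1.le ((le_div_iff₀ h1θ).mp hx.2.le)
  · apply monotoneOn_of_deriv_nonneg (convex_Ici _)
    · intro x hx
      have hx0 : (0:ℝ) ≤ x := le_trans (div_pos hθ0 h1θ).le hx
      exact (hD x hx0).differentiableAt.continuousAt.continuousWithinAt
    · intro x hx
      rw [interior_Ici] at hx
      have hx0 : (0:ℝ) ≤ x := le_trans (div_pos hθ0 h1θ).le hx.le
      exact (hD x hx0).differentiableAt.differentiableWithinAt
    · intro x hx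
      rw [interior_Ici] at hx
      have hx0 : (0:ℝ) ≤ x := le_trans (div_pos hθ0 h1θ).le hx.le
      rw [(hD x hx0).deriv]
      exact hsign_ge x hx0 ((div_le_iff₀ h1θ).mp hx.le)
  · intro η₁ hη₁
    refine ⟨?_, ?_, ?_⟩
    · rw [(hD η₁ hη₁.le).deriv]
      exact (halg η₁ hη₁).symm
    · intro hle
      rw [halg η₁ hη₁]
      exact hsign_le η₁ hη₁.le ((le_div_iff₀ h1θ).mp hle)
    · intro hle
      rw [halg η₁ hη₁]
      exact hsign_ge η₁ hη₁.le ((div_le_iff₀ h1θ).mp hle)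
end
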